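/- Let p > 1 and r ∈ (1, p]. Then the function x ↦ (1/p)|x^{1/p}|_r^p = (1/p)(∑_{i=1}^n x_i^{r/p})^{p/r} is concave on (0,∞)ⁿ. Equivalently, V(x) = |x|_r^p/p satisfies the concavity hypothesis that x ↦ V(x₁^{1/p},…,xₙ^{1/p}) is concave on the positive orthant. -/

import Mathlib

/-!
Write `s = r / p ∈ (0, 1]` and `G x = ∑ i, x i ^ s`. As a sum of concave powers, `G` is concave,
and it is homogeneous of degree `s`, so `G ^ s⁻¹` is positive and homogeneous of degree one. Such a
function is concave as soon as its superlevel set `{G ^ s⁻¹ ≥ 1} = {G ≥ 1}` is convex: `a • x + b • y`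
is `a A + b B` times a convex combination of `x / A` and `y / B`, where `A`, `B` are the values at
`x`, `y`.
-/

open Real Finset

section Homogeneous

variable {E : Type*} [AddCommGroup E] [Module ℝ E] {C : Set E} {G : E → ℝ} {s : ℝ}

theorem ConcaveOn.rpow_inv_of_homogeneous (hG : ConcaveOn ℝ C G) (hs : 0 < s)
    (hC : ∀ x ∈ C, ∀ t : ℝ, 0 < t → t • x ∈ C) (hpos : ∀ x ∈ C, 0 < G x)
    (hhom : ∀ x ∈ C, ∀ t : ℝ, 0 < t → G (t • x) = t ^ s * G x) :
    ConcaveOn ℝ C fun x => G x ^ s⁻¹ := by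
  have hnorm : ∀ z ∈ C, G ((G z ^ s⁻¹)⁻¹ • z) = 1 := fun z hz => by
    have hGz := hpos z hz
    rw [hhom z hz _ (by positivity), ← rpow_neg hGz.le, ← rpow_mul hGz.le, neg_mul,
      inv_mul_cancel₀ hs.ne', rpow_neg_one, inv_mul_cancel₀ hGz.ne']
  refine concaveOn_iff_forall_pos.2 ⟨hG.1, fun x hx y hy a b ha hb hab => ?_⟩
  set A := G x ^ s⁻¹
  set B := G y ^ s⁻¹
  have hA : 0 < A := rpow_pos_of_pos (hpos x hx) _
  have hB : 0 < B := rpow_pos_of_pos (hpos y hy) _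
  set c := a * A + b * B
  have hc : 0 < c := by positivity
  set w := (a * A / c) • (A⁻¹ • x) + (b * B / c) • (B⁻¹ • y)
  have hw : a • x + b • y = c • w := by
    simp only [w, smul_add, smul_smul]
    congr 2 <;> field_simp
  have hsum : a * A / c + b * B / c = 1 := by rw [← add_div, div_self hc.ne']
  have hxC := hC _ hx _ (inv_pos.2 hA)
  have hyC := hC _ hy _ (inv_pos.2 hB)
  have hwC : w ∈ C := hG.1 hxC hyC (by positivity) (by positivity) hsum
  have hGw : 1 ≤ G w := by
    have := hG.2 hxC hyC (by positivity) (by positivity) hsum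
    rwa [smul_eq_mul, smul_eq_mul, show G (A⁻¹ • x) = 1 from hnorm x hx,
      show G (B⁻¹ • y) = 1 from hnorm y hy, mul_one, mul_one, hsum] at this
  calc a • A + b • B = (c ^ s) ^ s⁻¹ := by
        rw [← rpow_mul hc.le, mul_inv_cancel₀ hs.ne', rpow_one]; rfl
    _ ≤ (c ^ s * G w) ^ s⁻¹ := by
        gcongr
        exact le_mul_of_one_le_right (by positivity) hGw
    _ = G (a • x + b • y) ^ s⁻¹ := by rw [hw, hhom w hwC c hc]

end Homogeneous

section Orthant

variable {ι : Type*} {s : ℝ}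

theorem convex_setOf_forall_pos : Convex ℝ {x : ι → ℝ | ∀ i, 0 < x i} := by
  simpa [Set.pi] using convex_pi (fun i (_ : i ∈ Set.univ) => convex_Ioi (0 : ℝ))

theorem concaveOn_sum_rpow [Fintype ι] (hs₀ : 0 ≤ s) (hs₁ : s ≤ 1) :
    ConcaveOn ℝ {x : ι → ℝ | ∀ i, 0 ≤ x i} fun x => ∑ i, x i ^ s := by
  refine ⟨?_, fun x hx y hy a b ha hb hab => ?_⟩
  · simpa [Set.pi] using convex_pi (fun i (_ : i ∈ Set.univ) => convex_Ici (0 : ℝ))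
  · simp only [smul_eq_mul, mul_sum, ← sum_add_distrib, Pi.add_apply, Pi.smul_apply]
    exact sum_le_sum fun i _ => (concaveOn_rpow hs₀ hs₁).2 (hx i) (hy i) ha hb hab

theorem sum_rpow_smul [Fintype ι] {t : ℝ} (ht : 0 ≤ t) {x : ι → ℝ} (hx : ∀ i, 0 ≤ x i) :
    ∑ i, (t • x) i ^ s = t ^ s * ∑ i, x i ^ s := by
  simp only [Pi.smul_apply, smul_eq_mul, mul_rpow ht (hx _), mul_sum]

theorem concaveOn_sum_rpow_rpow_inv [Fintype ι] [Nonempty ι] (hs₀ : 0 < s) (hs₁ : s ≤ 1) :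
    ConcaveOn ℝ {x : ι → ℝ | ∀ i, 0 < x i} fun x => (∑ i, x i ^ s) ^ s⁻¹ :=
  ((concaveOn_sum_rpow hs₀.le hs₁).subset (fun _ hx i => (hx i).le) convex_setOf_forall_pos)
    |>.rpow_inv_of_homogeneous hs₀ (fun _ hx _ ht i => mul_pos ht (hx i))
      (fun _ hx => sum_pos (fun i _ => rpow_pos_of_pos (hx i) s) univ_nonempty)
      (fun _ hx _ ht => sum_rpow_smul ht.le fun i => (hx i).le)

end Orthant

/-- Let `p > 1` and `r ∈ (1, p]`. Then `x ↦ (1/p)(∑ᵢ xᵢ^{r/p})^{p/r}` is concave on the open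
positive orthant `(0,∞)ⁿ`; i.e. `V(x) = |x|_r^p/p` satisfies that `x ↦ V(x^{1/p})` is concave
there. -/
theorem lr_norm_pow_concave (n : ℕ) (p r : ℝ) (hp : 1 < p) (hr : 1 < r) (hrp : r ≤ p) :
    ConcaveOn ℝ {x : Fin n → ℝ | ∀ i, 0 < x i}
      (fun x => (1 / p) * (∑ i, x i ^ (r / p)) ^ (p / r)) := by
  have hs₀ : 0 < r / p := div_pos (by linarith) (by linarith)
  have hs₁ : r / p ≤ 1 := (div_le_one (by linarith)).2 hrp
  rcases isEmpty_or_nonempty (Fin n) with _ | _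
  · simpa using concaveOn_const (1 / p * 0 ^ (p / r)) convex_univ
  · simpa only [inv_div, smul_eq_mul] using
      (concaveOn_sum_rpow_rpow_inv hs₀ hs₁).smul (c := 1 / p) (by positivity)
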